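/- Let V = B(0,1) ⊂ ℝ² be the open unit ball and let 𝓧(V) = {f ∈ H¹₀(V) : ∇f ∈ L^{2,1}(V)}. Then there is no modulus of continuity ω (i.e., no function ω : [0,∞) → [0,∞) with ω(s) → 0 as s → 0) and no constant C such that sup_{x≠y} |f(x) − f(y)| / ω(|x−y|) ≤ C‖∇f‖_{L^{2,1}(V)} holds for all f ∈ 𝓧(V); that is, 𝓧(V) does not embed into C^{0,ω}(V) for any modulus of continuity ω. -/

import Mathlib

open MeasureTheory Filter Metric Real Set
open scoped Topology ENNReal NNReal Classical ComplexConjugate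

noncomputable section

namespace GinzLan

/-! ### Basic differential-geometric quantities on `ℂ ≅ ℝ²` -/

/-- first partial derivative of a complex-valued map -/
def d1 (u : ℂ → ℂ) (x : ℂ) : ℂ := fderiv ℝ u x 1
/-- second partial derivative of a complex-valued map -/
def d2 (u : ℂ → ℂ) (x : ℂ) : ℂ := fderiv ℝ u x Complex.I
/-- first partial derivative of a real-valued map -/
def d1r (H : ℂ → ℝ) (x : ℂ) : ℝ := fderiv ℝ H x 1
/-- second partial derivative of a real-valued map -/
def d2r (H : ℂ → ℝ) (x : ℂ) : ℝ := fderiv ℝ H x Complex.I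

/-- first component of the covariant derivative `∇_A u = ∇u - iAu` -/
def covD1 (u A : ℂ → ℂ) (x : ℂ) : ℂ := d1 u x - Complex.I * ((A x).re : ℂ) * u x
/-- second component of the covariant derivative `∇_A u = ∇u - iAu` -/
def covD2 (u A : ℂ → ℂ) (x : ℂ) : ℂ := d2 u x - Complex.I * ((A x).im : ℂ) * u x
/-- `|∇_A u|²` -/
def covGradSq (u A : ℂ → ℂ) (x : ℂ) : ℝ := ‖covD1 u A x‖ ^ 2 + ‖covD2 u A x‖ ^ 2
/-- `|∇_A u|` -/
def covGradNorm (u A : ℂ → ℂ) (x : ℂ) : ℝ := Real.sqrt (covGradSq u A x)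

/-- `curl A = ∂₁A₂ - ∂₂A₁` for a plane vector field encoded as a `ℂ`-valued map -/
def curl (A : ℂ → ℂ) (x : ℂ) : ℝ := d1r (fun y => (A y).im) x - d2r (fun y => (A y).re) x

/-- real scalar product of two plane vectors encoded as complex numbers -/
def rdot (z w : ℂ) : ℝ := z.re * w.re + z.im * w.im

/-- the supercurrent `j = (iu, ∇_A u)`, encoded as a `ℂ`-valued map -/
def jcur (u A : ℂ → ℂ) (x : ℂ) : ℂ :=
  (((conj (u x) * covD1 u A x).im : ℝ) : ℂ) +
    (((conj (u x) * covD2 u A x).im : ℝ) : ℂ) * Complex.I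

/-- gradient of a real function, as a plane vector -/
def gradc (H : ℂ → ℝ) (x : ℂ) : ℂ := ((d1r H x : ℝ) : ℂ) + ((d2r H x : ℝ) : ℂ) * Complex.I
/-- rotated gradient `∇⊥H = (-∂₂H, ∂₁H)` -/
def perpGrad (H : ℂ → ℝ) (x : ℂ) : ℂ :=
  ((-(d2r H x) : ℝ) : ℂ) + ((d1r H x : ℝ) : ℂ) * Complex.I
/-- Laplacian of a real function -/
def lap (H : ℂ → ℝ) (x : ℂ) : ℝ := d1r (fun y => d1r H y) x + d2r (fun y => d2r H y) x

/-- gauge-invariant vorticity `μ(u,A) = curl (iu,∇_A u) + curl A` -/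
def vortFn (u A : ℂ → ℂ) (x : ℂ) : ℝ := curl (fun y => jcur u A y + A y) x

/-- the gradient of the phase `∇φ` where `u = ρ e^{iφ}`, i.e. `(iu,∇u)/|u|²` -/
def phGrad (u : ℂ → ℂ) (x : ℂ) : ℂ :=
  (((conj (u x) * d1 u x).im / ‖u x‖ ^ 2 : ℝ) : ℂ) +
    (((conj (u x) * d2 u x).im / ‖u x‖ ^ 2 : ℝ) : ℂ) * Complex.I

/-- `u/|u|` -/
def unitize (u : ℂ → ℂ) (x : ℂ) : ℂ := u x / ((‖u x‖ : ℝ) : ℂ)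

/-! ### Energies -/

/-- the free Ginzburg–Landau energy
`F_ε(u,A,V) = ½∫_V |∇_A u|² + |curl A|² + (1/(2ε²))(1-|u|²)²` -/
def Fen (ε : ℝ) (u A : ℂ → ℂ) (V : Set ℂ) : ℝ :=
  (1/2) * ∫ x in V,
    (covGradSq u A x + (curl A x) ^ 2 + (1/(2*ε^2)) * (1 - ‖u x‖^2)^2)

/-- the free energy of the modulus,
`F_ε(|u|,V) = ½∫_V |∇|u||² + (1/(2ε²))(1-|u|²)²` -/
def Fmod (ε : ℝ) (u : ℂ → ℂ) (V : Set ℂ) : ℝ :=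
  (1/2) * ∫ x in V,
    (‖fderiv ℝ (fun y => ‖u y‖) x‖^2 + (1/(2*ε^2)) * (1 - ‖u x‖^2)^2)

/-- the full Ginzburg–Landau energy with applied field `h_ex` -/
def Gen (ε hex : ℝ) (u A : ℂ → ℂ) (V : Set ℂ) : ℝ :=
  (1/2) * ∫ x in V,
    (covGradSq u A x + (curl A x - hex)^2 + (1/(2*ε^2)) * (1 - ‖u x‖^2)^2)

/-! ### Lorentz and Lorentz–Zygmund quantities -/

/-- the `L^{2,∞}` norm `‖f‖ = sup_{0<|E|<∞} |E|^{-1/2}∫_{E} |f|` of `f` on `V` -/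
def wL2 (f : ℂ → ℝ) (V : Set ℂ) : ℝ :=
  sSup ((fun E : Set ℂ =>
      ((volume E).toReal) ^ (-(1:ℝ)/2) * ∫ x in E ∩ V, |f x|) ''
    {E : Set ℂ | MeasurableSet E ∧ 0 < volume E ∧ volume E < ⊤})

/-- distribution function of `f` on `V` -/
def distF (f : ℂ → ℝ) (V : Set ℂ) (s : ℝ) : ℝ≥0∞ := volume {x ∈ V | s < |f x|}

/-- decreasing rearrangement of `f` on `V` -/
def rearr (f : ℂ → ℝ) (V : Set ℂ) (t : ℝ) : ℝ :=
  sInf {s : ℝ | 0 ≤ s ∧ distF f V s ≤ ENNReal.ofReal t}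

/-- the `L^{p,∞}` quasi-norm `sup_{t>0} t^{1/p} f*(t)` -/
def wLpNorm (p : ℝ) (f : ℂ → ℝ) (V : Set ℂ) : ℝ :=
  sSup ((fun t : ℝ => t ^ (1/p) * rearr f V t) '' Set.Ioi 0)

/-- the Lorentz–Zygmund quasi-norm `‖f‖_{L^{p,q}log^α L}`, `q < ∞` -/
def LZnorm (p q α : ℝ) (f : ℂ → ℝ) (V : Set ℂ) : ℝ :=
  (∫ t in Set.Ioi (0:ℝ),
    (t ^ (1/p) * Real.log (Real.exp 1 + 1/t) ^ α * rearr f V t) ^ q / t) ^ (1/q)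

/-- the Lorentz–Zygmund quasi-norm `‖f‖_{L^{p,∞}log^α L}` -/
def LZnormInf (p α : ℝ) (f : ℂ → ℝ) (V : Set ℂ) : ℝ :=
  sSup ((fun t : ℝ =>
    t ^ (1/p) * Real.log (Real.exp 1 + 1/t) ^ α * rearr f V t) '' Set.Ioi 0)

/-- membership in `L^{2,1}log^γ L(V)` (finiteness of the quasi-norm integral) -/
def memLZ21 (γ : ℝ) (f : ℂ → ℝ) (V : Set ℂ) : Prop :=
  IntegrableOn (fun t =>
    (t ^ ((1:ℝ)/2) * Real.log (Real.exp 1 + 1/t) ^ γ * rearr f V t) / t) (Set.Ioi 0)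

/-- the `L^{2,1}log^γ L(V)` norm -/
def L21norm (γ : ℝ) (f : ℂ → ℝ) (V : Set ℂ) : ℝ :=
  ∫ t in Set.Ioi (0:ℝ),
    (t ^ ((1:ℝ)/2) * Real.log (Real.exp 1 + 1/t) ^ γ * rearr f V t) / t

/-- membership in the space `𝓧_γ(V) = {f ∈ H¹₀(V) : ∇f ∈ L^{2,1}log^γ L(V)}` -/
def memX (γ : ℝ) (f : ℂ → ℝ) (V : Set ℂ) : Prop :=
  Differentiable ℝ f ∧ (∀ x ∉ V, f x = 0) ∧ memLZ21 γ (fun x => ‖gradc f x‖) V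

/-- the `𝓧*_γ(V)`-dual "distance": supremum of `|T f|` over the unit ball of `𝓧_{-γ}(V)` -/
def XdualDist (γ : ℝ) (V : Set ℂ) (T : (ℂ → ℝ) → ℝ) : ℝ :=
  sSup ((fun f : ℂ → ℝ => |T f|) ''
    {f | memX (-γ) f V ∧ L21norm (-γ) (fun x => ‖gradc f x‖) V ≤ 1})

/-! ### Degrees and vortex balls -/

/-- topological degree of `u` on the circle `∂B(a,r)`, computed as a winding integral -/
def deg (u : ℂ → ℂ) (a : ℂ) (r : ℝ) : ℝ :=
  (2*π)⁻¹ * ∫ t in (0:ℝ)..(2*π),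
    (conj (u (a + (r:ℂ) * Complex.exp ((t:ℂ) * Complex.I))) *
      fderiv ℝ u (a + (r:ℂ) * Complex.exp ((t:ℂ) * Complex.I))
        ((r:ℂ) * Complex.I * Complex.exp ((t:ℂ) * Complex.I))).im /
    ‖u (a + (r:ℂ) * Complex.exp ((t:ℂ) * Complex.I))‖^2

/-- degree (winding number) of `u` along a closed curve `γ : [0,1] → ℂ` -/
def degCurve (u : ℂ → ℂ) (γ : ℝ → ℂ) : ℝ :=
  (2*π)⁻¹ * ∫ t in (0:ℝ)..1,
    (conj (u (γ t)) * fderiv ℝ u (γ t) (deriv γ t)).im / ‖u (γ t)‖^2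

/-- the union of the closed balls in a finite collection -/
def ballSet (B : Finset (ℂ × ℝ)) : Set ℂ := ⋃ b ∈ B, closedBall b.1 b.2

/-- the collection consists of disjoint closed balls of positive radius -/
def disjBalls (B : Finset (ℂ × ℝ)) : Prop :=
  (∀ b ∈ B, 0 < b.2) ∧
  (↑B : Set (ℂ × ℝ)).Pairwise fun b b' =>
    Disjoint (closedBall b.1 b.2) (closedBall b'.1 b'.2)

/-- total radius -/
def radSum (B : Finset (ℂ × ℝ)) : ℝ := ∑ b ∈ B, b.2

/-- `Ω_ε = {x ∈ Ω : dist(x,∂Ω) > ε}` -/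
def innerSet (Ω : Set ℂ) (ε : ℝ) : Set ℂ := {x ∈ Ω | ε < infDist x Ωᶜ}

/-- `d_B = deg(u,∂B)` if `B ⊆ Ω` and `0` otherwise -/
def dB (u : ℂ → ℂ) (Ω : Set ℂ) (b : ℂ × ℝ) : ℝ :=
  if closedBall b.1 b.2 ⊆ Ω then deg u b.1 b.2 else 0

/-- total vorticity mass `n = Σ_{B ⊆ W} |d_B|` -/
def vmass (u : ℂ → ℂ) (Ω W : Set ℂ) (B : Finset (ℂ × ℝ)) : ℝ :=
  ∑ b ∈ B, if closedBall b.1 b.2 ⊆ W then |dB u Ω b| else 0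

/-- cut-off function `f(x) = 1` for `x ≤ 1`, `1/x` for `x > 1` -/
def fcut (s : ℝ) : ℝ := if s ≤ 1 then 1 else s⁻¹

/-- degree function `D(t) = Σ_{|b_i - p| ≤ t} d_i` -/
def Dfun (u : ℂ → ℂ) (Bals : Finset (ℂ × ℝ)) (bpt : (ℂ × ℝ) → ℂ) (p : ℂ) (t : ℝ) : ℝ :=
  ∑ b ∈ Bals, if ‖bpt b - p‖ ≤ t then deg u b.1 b.2 else 0

/-- the exceptional radii `T = {t ∈ (a,b) : ∂B(p,t) ∩ 𝓑 ≠ ∅}` -/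
def Tset (Bals : Finset (ℂ × ℝ)) (p : ℂ) (a b : ℝ) : Set ℝ :=
  {t | t ∈ Set.Ioo a b ∧ ∃ q ∈ Bals, (sphere p t ∩ closedBall q.1 q.2).Nonempty}

/-- annular vector field `Y(x) = D(|x-p|) τ(x) / |x-p|` off the exceptional set, `0` on it -/
def Yann (u : ℂ → ℂ) (Bals : Finset (ℂ × ℝ)) (bpt : (ℂ × ℝ) → ℂ) (p : ℂ) (a b : ℝ)
    (x : ℂ) : ℂ :=
  if ‖x - p‖ ∈ Tset Bals p a b then 0
  else (Dfun u Bals bpt p ‖x - p‖ / ‖x - p‖^2) • (Complex.I * (x - p))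

/-- `|c∇_A u - iuX|²` pointwise -/
def covDiffSq (u A : ℂ → ℂ) (c : ℝ) (X : ℂ → ℂ) (x : ℂ) : ℝ :=
  ‖c • covD1 u A x - Complex.I * (((X x).re : ℝ) : ℂ) * u x‖^2 +
  ‖c • covD2 u A x - Complex.I * (((X x).im : ℝ) : ℂ) * u x‖^2

/-- blow-up of a vector field at scale `t` around `p` -/
def blowupV (t : ℝ) (p : ℂ) (W : ℂ → ℂ) (x : ℂ) : ℂ := t • W (p + (t:ℂ) * x)

/-- blow-down of a vector field at scale `t` around `p` -/
def blowdownV (t : ℝ) (p : ℂ) (W : ℂ → ℂ) (x : ℂ) : ℂ := t⁻¹ • W ((x - p) / (t:ℂ))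

/-! ### The setting of Chapter 9 of Sandier–Serfaty (regimes 2 and 3) -/

/-- the filter `ε → 0⁺` -/
def lim0 : Filter ℝ := 𝓝[>] (0:ℝ)

/-- Data of a family of Ginzburg–Landau configurations together with the two-scale
vortex-ball construction. -/
structure Setting where
  Ω : Set ℂ
  ξ : ℂ → ℝ
  α : ℝ
  β : ℝ
  C : ℝ
  Cb : ℝ
  u : ℝ → ℂ → ℂ
  A : ℝ → ℂ → ℂ
  A' : ℝ → ℂ → ℂ
  hex : ℝ → ℝ
  B : ℝ → Finset (ℂ × ℝ)
  B' : ℝ → Finset (ℂ × ℝ)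
  n : ℝ → ℝ
  n' : ℝ → ℝ

/-- intervortex distance scale `ℓ = √(n/h_ex)` -/
def ell (S : Setting) (ε : ℝ) : ℝ := Real.sqrt (S.n ε / S.hex ε)

/-- `J₀ = ½‖ξ₀‖²_{H¹(Ω)}` -/
def J0 (S : Setting) : ℝ := (1/2) * ∫ x in S.Ω, (‖gradc S.ξ x‖^2 + (S.ξ x)^2)

/-- `f_ε(n) = h_ex²J₀ + πn|log ε| + 2πn h_ex ξ₀(p) + πn²S_Ω(p,p) + π(n²-n)log(1/ℓ)` -/
def feps (S : Setting) (p : ℂ) (Spp : ℝ) (ε : ℝ) : ℝ :=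
  (S.hex ε)^2 * J0 S + π * S.n ε * |Real.log ε| + 2*π*(S.n ε)*(S.hex ε)*(S.ξ p)
    + π*(S.n ε)^2*Spp + π*((S.n ε)^2 - S.n ε) * Real.log (1 / ell S ε)

/-- Hessian quadratic form `Q(x) = D²ξ(p)[x,x]` -/
def Qform (ξ : ℂ → ℝ) (p x : ℂ) : ℝ := fderiv ℝ (fun y => fderiv ℝ ξ y x) p x

/-- The structural hypotheses: regular bounded domain, `ξ₀` solving its PDE,
`A' = A - h_ex ∇⊥ξ₀`, the two-scale ball construction with final radius `1/√h_ex` and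
initial radius `C_b ε^{α/2}`, and hypothesis (H1). -/
structure Hyp (S : Setting) : Prop where
  openΩ : IsOpen S.Ω
  bddΩ : Bornology.IsBounded S.Ω
  xiC : ContDiffOn ℝ 2 S.ξ S.Ω
  xiPDE : ∀ x ∈ S.Ω, lap S.ξ x = S.ξ x + 1
  xiBd : ∀ x ∈ frontier S.Ω, S.ξ x = 0
  alphaMem : S.α ∈ Set.Ioo (2/3 : ℝ) 1
  betaMem : S.β ∈ Set.Ioo (0:ℝ) (3*S.α/2 - 1)
  Cpos : 0 < S.C
  Cbpos : 0 < S.Cb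
  reg : ∀ᶠ ε in lim0, ContDiffOn ℝ 1 (S.u ε) S.Ω ∧ ContDiffOn ℝ 1 (S.A ε) S.Ω
  A'def : ∀ ε x, S.A' ε x = S.A ε x - ((S.hex ε : ℝ) : ℂ) * perpGrad S.ξ x
  ballsB : ∀ᶠ ε in lim0, disjBalls (S.B ε) ∧ radSum (S.B ε) = 1 / Real.sqrt (S.hex ε) ∧
      (∀ b ∈ S.B ε, closedBall b.1 b.2 ⊆ S.Ω) ∧
      {x ∈ innerSet S.Ω ε | ε ^ (S.α/4) ≤ |‖S.u ε x‖ - 1|} ⊆ ballSet (S.B ε)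
  ballsB' : ∀ᶠ ε in lim0, disjBalls (S.B' ε) ∧ radSum (S.B' ε) = S.Cb * ε ^ (S.α/2) ∧
      (∀ b ∈ S.B' ε, closedBall b.1 b.2 ⊆ S.Ω) ∧
      ∀ b' ∈ S.B' ε, ∃ b ∈ S.B ε, closedBall b'.1 b'.2 ⊆ closedBall b.1 b.2
  ndef : ∀ ε, S.n ε = ∑ b ∈ S.B ε, |deg (S.u ε) b.1 b.2|
  n'def : ∀ ε, S.n' ε = ∑ b ∈ S.B' ε, |deg (S.u ε) b.1 b.2|
  H1 : ∀ᶠ ε in lim0, Fen ε (S.u ε) (S.A' ε) S.Ω ≤ ε ^ (S.α - 1) ∧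
      10 ≤ S.hex ε ∧ S.hex ε ≤ S.C * ε ^ (-S.β)

/-- `p` is the unique minimum point of `ξ₀`, with positive definite Hessian. -/
structure PMin (S : Setting) (p : ℂ) : Prop where
  mem : p ∈ S.Ω
  min : ∀ x ∈ S.Ω, x ≠ p → S.ξ p < S.ξ x
  posdef : ∀ x : ℂ, x ≠ 0 → 0 < Qform S.ξ p x

/-- `G_p` is the Green-type function `-ΔG_p + G_p = 2πδ_p`, `G_p = 0` on `∂Ω`, with
regular part tending to `S_Ω(p,p) = Spp` at `p`. -/
structure GpSet (S : Setting) (p : ℂ) (Gp : ℂ → ℝ) (Spp : ℝ) : Prop where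
  C1 : ContDiffOn ℝ 2 Gp (S.Ω \ {p})
  PDE : ∀ x ∈ S.Ω \ {p}, lap Gp x = Gp x
  bd : ∀ x ∈ frontier S.Ω, Gp x = 0
  SppLim : Tendsto (fun x => Gp x + Real.log ‖x - p‖) (𝓝[≠] p) (𝓝 Spp)

/-- (H2): `1 ≤ n ≪ h_ex` -/
def H2 (S : Setting) : Prop :=
  (∀ᶠ ε in lim0, 1 ≤ S.n ε) ∧ Tendsto (fun ε => S.n ε / S.hex ε) lim0 (𝓝 0)

/-- (H3): `h_ex ≤ C|log ε|` or `n' = n` -/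
def H3 (S : Setting) : Prop :=
  (∃ C₁ : ℝ, ∀ᶠ ε in lim0, S.hex ε ≤ C₁ * |Real.log ε|) ∨ ∀ᶠ ε in lim0, S.n' ε = S.n ε

/-- (H4): `G_ε(u,A) ≤ f_ε(n) + C₀n²` -/
def H4 (S : Setting) (p : ℂ) (Spp C₀ : ℝ) : Prop :=
  0 ≤ C₀ ∧ ∀ᶠ ε in lim0,
    Gen ε (S.hex ε) (S.u ε) (S.A ε) S.Ω ≤ feps S p Spp ε + C₀ * (S.n ε)^2

/-- `1 ≪ n` -/
def nBig (S : Setting) : Prop := Tendsto S.n lim0 atTop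

/-- the blown-up vorticity `μ̃(x) = ℓ² χ_Ω(p+ℓx) μ(u,A)(p+ℓx)` (as a density) -/
def muBlow (S : Setting) (Af : ℝ → ℂ → ℂ) (p : ℂ) (ε : ℝ) (x : ℂ) : ℝ :=
  (ell S ε)^2 * Set.indicator S.Ω (fun _ => (1:ℝ)) (p + ((ell S ε : ℝ) : ℂ) * x) *
    vortFn (S.u ε) (Af ε) (p + ((ell S ε : ℝ) : ℂ) * x)

/-- `μ_*` is the weak-* limit of `μ̃(u_ε,A'_ε)/(2πn)` (tested on `C_c`), a probability
measure -/
def muStarLim (S : Setting) (p : ℂ) (μs : Measure ℂ) : Prop :=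
  IsProbabilityMeasure μs ∧
  ∀ φ : ℂ → ℝ, Continuous φ → HasCompactSupport φ →
    Tendsto (fun ε => (2*π*S.n ε)⁻¹ * ∫ x, φ x * muBlow S S.A' p ε x) lim0
      (𝓝 (∫ x, φ x ∂μs))

/-- the renormalized energy `I(μ) = -π∬log|x-y|dμdμ + π∫Q dμ` -/
def Iren (Q : ℂ → ℝ) (μ : Measure ℂ) : ℝ :=
  -π * ∫ x, (∫ y, Real.log ‖x - y‖ ∂μ) ∂μ + π * ∫ x, Q x ∂μ

/-- `U_*` solves `ΔU_* = 2πμ_*` in `B(0,K)`, `U_* = 0` on `∂B(0,K)` (weak form) -/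
def UstarOk (μs : Measure ℂ) (K : ℝ) (U : ℂ → ℝ) : Prop :=
  (∀ x ∈ sphere (0:ℂ) K, U x = 0) ∧
  ∀ φ : ℂ → ℝ, ContDiff ℝ 2 φ → HasCompactSupport φ → tsupport φ ⊆ ball (0:ℂ) K →
    ∫ x in ball (0:ℂ) K, U x * lap φ x = 2*π*∫ x, φ x ∂μs

/-- the piecewise vector field `X_ε`: `(1/n)Y` on the balls, `(1/n)Y_ann` on the annulus,
`f(|u|)·(blow-down of ∇⊥U_*)` near `p`, and `-f(|u|)∇⊥G_p` away from `p`. -/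
def Xfield (Ω : Set ℂ) (u Y : ℂ → ℂ) (Bals : Finset (ℂ × ℝ)) (bpt : (ℂ × ℝ) → ℂ)
    (p : ℂ) (Gp Ustar : ℂ → ℝ) (n t K δ : ℝ) (x : ℂ) : ℂ :=
  if x ∈ ballSet Bals then n⁻¹ • Y x
  else if x ∈ ball p δ \ closedBall p (K*t) then n⁻¹ • Yann u Bals bpt p (K*t) δ x
  else if x ∈ ball p (K*t) then fcut ‖u x‖ • blowdownV t p (perpGrad Ustar) x
  else if x ∈ Ω \ ball p δ then (-(fcut ‖u x‖)) • perpGrad Gp x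
  else 0

/-! A modulus of continuity cannot exist because the `L^{2,1}` norm of the gradient is scale
invariant in the plane. If `φ` is a fixed bump with `φ(0) = 1` supported in the unit disc, then
`f_r(x) = φ(x/r)` has gradient at most `M/r` on a disc of area `πr²`, so
`‖∇f_r‖_{L^{2,1}} ≤ 2 (M/r) √(πr²) = 2M√π` for every `r`. Yet `f_r` drops from `1` to `0` between
`0` and `r`, so the embedding would give `1 ≤ C · 2M√π · ω(r)`, which fails as `r → 0`. -/

lemma integrableOn_indicator_Ioc_rpow_neg_half (M a : ℝ) :
    IntegrableOn ((Ioc 0 a).indicator fun s => M * s ^ (-(1/2):ℝ)) (Ioi 0) := by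
  have h := (intervalIntegral.intervalIntegrable_rpow' (a := 0) (b := a)
    (by norm_num : (-1:ℝ) < -(1/2))).const_mul M
  exact (h.1.integrable_indicator measurableSet_Ioc).integrableOn

lemma integral_indicator_Ioc_rpow_neg_half (M : ℝ) {a : ℝ} (ha : 0 ≤ a) :
    ∫ t in Ioi 0, (Ioc 0 a).indicator (fun s => M * s ^ (-(1/2):ℝ)) t = 2 * M * √a := by
  rw [setIntegral_indicator measurableSet_Ioc, inter_eq_self_of_subset_right Ioc_subset_Ioi_self,
    ← intervalIntegral.integral_of_le ha, intervalIntegral.integral_const_mul,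
    integral_rpow (Or.inl (by norm_num)), Real.sqrt_eq_rpow]
  norm_num
  ring

lemma rearr_nonneg (f : ℂ → ℝ) (V : Set ℂ) (t : ℝ) : 0 ≤ rearr f V t :=
  Real.sInf_nonneg fun _ hs => hs.1

lemma L21norm_nonneg (γ : ℝ) (f : ℂ → ℝ) (V : Set ℂ) : 0 ≤ L21norm γ f V := by
  refine setIntegral_nonneg measurableSet_Ioi fun t (ht : 0 < t) => ?_
  have hlog : 0 ≤ Real.log (Real.exp 1 + 1 / t) :=
    Real.log_nonneg (by linarith [Real.add_one_le_exp 1, one_div_pos.mpr ht])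
  have := rearr_nonneg f V t
  positivity

section Rearrangement

variable {f : ℂ → ℝ} {V : Set ℂ} {M a : ℝ}

lemma distF_eq_zero_of_forall_abs_le (hf : ∀ x ∈ V, |f x| ≤ M) : distF f V M = 0 := by
  rw [distF, Set.eq_empty_of_forall_notMem (s := {x ∈ V | M < |f x|})
    fun x hx => (hf x hx.1).not_gt hx.2, measure_empty]

lemma rearr_le_of_forall_abs_le (hM : 0 ≤ M) (hf : ∀ x ∈ V, |f x| ≤ M) (t : ℝ) :
    rearr f V t ≤ M :=
  csInf_le ⟨0, fun _ hs => hs.1⟩ ⟨hM, by simp [distF_eq_zero_of_forall_abs_le hf]⟩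

lemma antitone_rearr_of_forall_abs_le (hM : 0 ≤ M) (hf : ∀ x ∈ V, |f x| ≤ M) :
    Antitone (rearr f V) := fun _ _ hst =>
  csInf_le_csInf ⟨0, fun _ hs => hs.1⟩ ⟨M, hM, by simp [distF_eq_zero_of_forall_abs_le hf]⟩
    fun _ hs => ⟨hs.1, hs.2.trans (ENNReal.ofReal_le_ofReal hst)⟩

lemma rearr_eq_zero_of_distF_zero_le (ha : distF f V 0 ≤ ENNReal.ofReal a) {t : ℝ}
    (hat : a ≤ t) : rearr f V t = 0 :=
  le_antisymm (csInf_le ⟨0, fun _ hs => hs.1⟩ ⟨le_rfl, ha.trans (ENNReal.ofReal_le_ofReal hat)⟩)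
    (rearr_nonneg f V t)

lemma L21norm_zero_eq (f : ℂ → ℝ) (V : Set ℂ) :
    L21norm 0 f V = ∫ t in Ioi (0:ℝ), t ^ ((1:ℝ)/2) * rearr f V t / t := by
  simp only [L21norm, Real.rpow_zero, mul_one]

lemma memLZ21_zero_iff (f : ℂ → ℝ) (V : Set ℂ) :
    memLZ21 0 f V ↔ IntegrableOn (fun t => t ^ ((1:ℝ)/2) * rearr f V t / t) (Ioi 0) := by
  simp only [memLZ21, Real.rpow_zero, mul_one]

lemma L21norm_integrand_le_indicator (hM : 0 ≤ M) (hf : ∀ x ∈ V, |f x| ≤ M)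
    (ha : distF f V 0 ≤ ENNReal.ofReal a) {t : ℝ} (ht : 0 < t) :
    ‖t ^ ((1:ℝ)/2) * rearr f V t / t‖ ≤ (Ioc 0 a).indicator (fun s => M * s ^ (-(1/2):ℝ)) t := by
  have hnonneg : 0 ≤ t ^ ((1:ℝ)/2) * rearr f V t / t := by
    have := rearr_nonneg f V t
    positivity
  rw [Real.norm_eq_abs, abs_of_nonneg hnonneg]
  by_cases hta : t ≤ a
  · rw [indicator_of_mem (show t ∈ Ioc 0 a from ⟨ht, hta⟩), mul_div_right_comm,
      ← Real.rpow_sub_one ht.ne', mul_comm]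
    norm_num only
    exact mul_le_mul_of_nonneg_right (rearr_le_of_forall_abs_le hM hf t) (by positivity)
  · rw [indicator_of_notMem fun h => hta h.2,
      rearr_eq_zero_of_distF_zero_le ha (not_le.mp hta).le, mul_zero, zero_div]

lemma memLZ21_zero_of_forall_abs_le (hM : 0 ≤ M) (hf : ∀ x ∈ V, |f x| ≤ M)
    (ha : distF f V 0 ≤ ENNReal.ofReal a) : memLZ21 0 f V := by
  have hmeas : Measurable fun t : ℝ => t ^ ((1:ℝ)/2) * rearr f V t / t :=
    ((measurable_id.pow_const _).mul (antitone_rearr_of_forall_abs_le hM hf).measurable).div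
      measurable_id
  rw [memLZ21_zero_iff]
  refine (integrableOn_indicator_Ioc_rpow_neg_half M a).mono' hmeas.aestronglyMeasurable ?_
  exact (ae_restrict_iff' measurableSet_Ioi).mpr
    (.of_forall fun _ ht => L21norm_integrand_le_indicator hM hf ha ht)

lemma L21norm_zero_le_of_forall_abs_le (hM : 0 ≤ M) (hf : ∀ x ∈ V, |f x| ≤ M)
    (ha0 : 0 ≤ a) (ha : distF f V 0 ≤ ENNReal.ofReal a) : L21norm 0 f V ≤ 2 * M * √a := by
  rw [L21norm_zero_eq, ← integral_indicator_Ioc_rpow_neg_half M ha0]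
  refine setIntegral_mono_on ((memLZ21_zero_iff f V).mp (memLZ21_zero_of_forall_abs_le hM hf ha))
    (integrableOn_indicator_Ioc_rpow_neg_half M a) measurableSet_Ioi fun t ht => ?_
  exact (le_abs_self _).trans (L21norm_integrand_le_indicator hM hf ha ht)

end Rearrangement

lemma norm_gradc_le (H : ℂ → ℝ) (x : ℂ) : ‖gradc H x‖ ≤ 2 * ‖fderiv ℝ H x‖ := by
  have h1 : |d1r H x| ≤ ‖fderiv ℝ H x‖ := by
    simpa [d1r] using (fderiv ℝ H x).le_opNorm 1
  have hI : |d2r H x| ≤ ‖fderiv ℝ H x‖ := by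
    simpa [d2r] using (fderiv ℝ H x).le_opNorm Complex.I
  calc ‖gradc H x‖ ≤ |d1r H x| + |d2r H x| := by
        simpa [gradc] using norm_add_le ((d1r H x : ℂ)) ((d2r H x : ℂ) * Complex.I)
    _ ≤ 2 * ‖fderiv ℝ H x‖ := by linarith

def unitBump : ContDiffBump (0:ℂ) := ⟨1/2, 1, by norm_num, by norm_num⟩

def scaledBump (r : ℝ) (x : ℂ) : ℝ := unitBump (r⁻¹ • x)

lemma scaledBump_zero (r : ℝ) : scaledBump r 0 = 1 := by
  rw [scaledBump, smul_zero]
  exact unitBump.one_of_mem_closedBall (mem_closedBall_self (by norm_num [unitBump]))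

lemma scaledBump_eq_zero {r : ℝ} (hr : 0 < r) {x : ℂ} (hx : r ≤ ‖x‖) : scaledBump r x = 0 := by
  refine unitBump.zero_of_le_dist ?_
  rw [dist_zero_right, norm_smul, norm_inv, Real.norm_of_nonneg hr.le]
  exact (le_inv_mul_iff₀ hr).mpr (by simpa [unitBump] using hx)

lemma differentiable_scaledBump (r : ℝ) : Differentiable ℝ (scaledBump r) :=
  ((unitBump.contDiff (n := 1)).comp (contDiff_const_smul r⁻¹)).differentiable one_ne_zero

lemma tsupport_scaledBump_subset {r : ℝ} (hr : 0 < r) :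
    tsupport (scaledBump r) ⊆ closedBall 0 r :=
  closure_minimal (fun x hx => by
    by_contra h
    rw [mem_closedBall_zero_iff, not_le] at h
    exact hx (scaledBump_eq_zero hr h.le)) isClosed_closedBall

lemma exists_norm_fderiv_scaledBump_le :
    ∃ M, 0 ≤ M ∧ ∀ r, 0 < r → ∀ x, ‖fderiv ℝ (scaledBump r) x‖ ≤ M / r := by
  obtain ⟨M, hM⟩ := ((unitBump.contDiff (n := 1)).continuous_fderiv one_ne_zero)
    |>.bounded_above_of_compact_support (unitBump.hasCompactSupport.fderiv ℝ)
  refine ⟨M, (norm_nonneg _).trans (hM 0), fun r hr x => ?_⟩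
  change ‖fderiv ℝ (fun x => unitBump (r⁻¹ • x)) x‖ ≤ M / r
  rw [fderiv_comp_smul, norm_smul, norm_inv, Real.norm_of_nonneg hr.le, inv_mul_eq_div]
  exact div_le_div_of_nonneg_right (hM _) hr.le

lemma distF_norm_gradc_zero_le {H : ℂ → ℝ} {r : ℝ} (hr : 0 ≤ r)
    (hH : tsupport H ⊆ closedBall 0 r) (V : Set ℂ) :
    distF (fun z => ‖gradc H z‖) V 0 ≤ ENNReal.ofReal (π * r ^ 2) := by
  have hsub : {x ∈ V | 0 < |‖gradc H x‖|} ⊆ closedBall 0 r := fun x hx => by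
    refine hH (support_fderiv_subset ℝ fun h0 => ?_)
    have := norm_gradc_le H x
    rw [h0, norm_zero, mul_zero] at this
    exact abs_pos.mp hx.2 (le_antisymm this (norm_nonneg _))
  calc distF _ V 0 ≤ volume (closedBall (0:ℂ) r) := measure_mono hsub
    _ = ENNReal.ofReal (π * r ^ 2) := by
      rw [Complex.volume_closedBall, ← ENNReal.ofReal_pow hr, ← NNReal.coe_real_pi,
        ENNReal.ofReal_coe_nnreal.symm, ← ENNReal.ofReal_mul (by positivity), mul_comm]

lemma exists_forall_memX_scaledBump_and_L21norm_le :
    ∃ K, ∀ r, 0 < r → r < 1 → memX 0 (scaledBump r) (ball 0 1) ∧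
      L21norm 0 (fun z => ‖gradc (scaledBump r) z‖) (ball 0 1) ≤ K := by
  obtain ⟨M, hM, hfderiv⟩ := exists_norm_fderiv_scaledBump_le
  refine ⟨4 * M * √π, fun r hr hr1 => ?_⟩
  have hgrad : ∀ x ∈ ball (0:ℂ) 1, |‖gradc (scaledBump r) x‖| ≤ 2 * (M / r) := fun x _ => by
    rw [abs_norm]
    exact (norm_gradc_le _ x).trans (by linarith [hfderiv r hr x])
  have hdist := distF_norm_gradc_zero_le hr.le (tsupport_scaledBump_subset hr) (ball 0 1)
  have h2M : 0 ≤ 2 * (M / r) := by positivity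
  refine ⟨⟨differentiable_scaledBump r, fun x hx => scaledBump_eq_zero hr ?_,
    memLZ21_zero_of_forall_abs_le h2M hgrad hdist⟩, ?_⟩
  · simpa using hr1.le.trans (not_lt.mp hx)
  · calc _ ≤ 2 * (2 * (M / r)) * √(π * r ^ 2) :=
          L21norm_zero_le_of_forall_abs_le h2M hgrad (by positivity) hdist
      _ = 4 * M * √π := by
          rw [Real.sqrt_mul Real.pi_pos.le, Real.sqrt_sq hr.le]
          field_simp
          ring

/-- no modulus-of-continuity embedding for `𝓧(B(0,1))`.  There is no
modulus of continuity `ω` (i.e. `ω : [0,∞) → [0,∞)` with `ω(s) → 0` as `s → 0⁺`) and no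
constant `C` such that every `f ∈ 𝓧(B(0,1)) = {f ∈ H¹₀ : ∇f ∈ L^{2,1}}` satisfies
`|f(x) - f(y)| ≤ C ‖∇f‖_{L^{2,1}(B(0,1))} ω(|x-y|)` for all `x ≠ y`. -/
theorem no_modulus_embedding :
    ¬ ∃ (ω : ℝ → ℝ) (C : ℝ),
        (∀ s, 0 ≤ ω s) ∧ Tendsto ω (𝓝[>] (0:ℝ)) (𝓝 0) ∧
        ∀ f : ℂ → ℝ, memX 0 f (ball (0:ℂ) 1) →
          ∀ x y : ℂ, x ≠ y →
            |f x - f y| ≤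
              C * L21norm 0 (fun z => ‖gradc f z‖) (ball (0:ℂ) 1) * ω (dist x y) := by
  rintro ⟨ω, C, hω0, hω, hemb⟩
  obtain ⟨K, hK⟩ := exists_forall_memX_scaledBump_and_L21norm_le
  have hsmall : ∀ᶠ r in 𝓝[>] (0:ℝ), |C| * K * ω r < 1 :=
    (by simpa using hω.const_mul (|C| * K) : Tendsto (fun r => |C| * K * ω r) _ (𝓝 0))
      |>.eventually_lt_const one_pos
  obtain ⟨r, hCr, hr1, hr0⟩ := (hsmall.and ((eventually_nhdsWithin_of_eventually_nhds
    (gt_mem_nhds one_pos)).and self_mem_nhdsWithin)).exists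
  obtain ⟨hX, hL⟩ := hK r hr0 hr1
  have hjump := hemb _ hX 0 r (by exact_mod_cast hr0.ne)
  rw [scaledBump_zero, scaledBump_eq_zero hr0 (by simp [abs_of_pos hr0]), dist_zero_left,
    Complex.norm_real, Real.norm_of_nonneg hr0.le, sub_zero, abs_one] at hjump
  have hL0 := L21norm_nonneg 0 (fun z => ‖gradc (scaledBump r) z‖) (ball 0 1)
  have : C * L21norm 0 (fun z => ‖gradc (scaledBump r) z‖) (ball 0 1) ≤ |C| * K :=
    (mul_le_mul_of_nonneg_right (le_abs_self C) hL0).trans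
      (mul_le_mul_of_nonneg_left hL (abs_nonneg C))
  nlinarith [hω0 r]
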